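/- Let g : ℝ → ℝ be continuous with compact support contained in (0, ∞), and define v(t,r) = (4πt)^{−1/2} ∫₀^∞ k(t,r,s) g(s) ds for t > 0 and r ∈ ℝ. Then v(t,0) = 0 for every t > 0, and v satisfies the one-dimensional heat equation ∂ₜ v(t,r) = ∂ᵣ² v(t,r) for all t > 0 and r > 0. -/

import Mathlib

open MeasureTheory

/-- `k(t,r,s) = exp(-(r-s)²/(4t)) - exp(-(r+s)²/(4t))`,
the (unnormalized) Dirichlet heat kernel of the half-line. -/
noncomputable def halfLineKernel (t r s : ℝ) : ℝ :=
  Real.exp (-(r - s) ^ 2 / (4 * t)) - Real.exp (-(r + s) ^ 2 / (4 * t))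

/-- `v(t,r) = (4πt)^{-1/2} ∫₀^∞ k(t,r,s) g(s) ds`. -/
noncomputable def halfLineSol (g : ℝ → ℝ) (t r : ℝ) : ℝ :=
  (4 * Real.pi * t) ^ (-(1 : ℝ) / 2) * ∫ s in Set.Ioi (0 : ℝ), halfLineKernel t r s * g s

open Set Function Real

/-! Writing `k(t,r,s) = √(4πt) (φ_t(r - s) - φ_t(r + s))` with `φ_t` the Gaussian heat kernel,
`v(t,·)` is the convolution of `φ_t` with the odd extension of `g`, hence odd in `r`, so it vanishes
at `0`. Since `g` is continuous with compact support, all derivatives of the kernel are dominated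
uniformly on compact parameter sets, so `∂ₜ` and `∂ᵣ²` pass under the integral, where they agree
because `∂ₜ φ = ∂ₓ² φ`. -/

section ParametricIntegral

variable {μ : Measure ℝ} [IsFiniteMeasureOnCompacts μ] {g : ℝ → ℝ}

theorem hasDerivAt_integral_mul_of_hasCompactSupport (hg : Continuous g)
    (hsupp : HasCompactSupport g) {H H' : ℝ → ℝ → ℝ} {U : Set ℝ} (hU : IsOpen U) {x₀ : ℝ}
    (hx₀ : x₀ ∈ U) (hH : ∀ x ∈ U, Continuous (H x))
    (hH' : ContinuousOn (uncurry H') (U ×ˢ univ))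
    (hd : ∀ x ∈ U, ∀ s, HasDerivAt (H · s) (H' x s) x) :
    HasDerivAt (fun x => ∫ s, H x s * g s ∂μ) (∫ s, H' x₀ s * g s ∂μ) x₀ := by
  obtain ⟨ε, hε, hεU⟩ := Metric.nhds_basis_closedBall.mem_iff.1 (hU.mem_nhds hx₀)
  have hball : Metric.ball x₀ ε ⊆ U := Metric.ball_subset_closedBall.trans hεU
  obtain ⟨C, hC⟩ := ((isCompact_closedBall x₀ ε).prod hsupp).exists_bound_of_continuousOn
    ((hH'.mono (prod_mono hεU (subset_univ _))).mul (hg.comp continuous_snd).continuousOn)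
  have hbound : ∀ s, ∀ x ∈ Metric.ball x₀ ε,
      ‖H' x s * g s‖ ≤ (tsupport g).indicator (fun _ => C) s := by
    intro s x hx
    by_cases hs : s ∈ tsupport g
    · rw [indicator_of_mem hs]
      exact hC (x, s) ⟨Metric.ball_subset_closedBall hx, hs⟩
    · simp [image_eq_zero_of_notMem_tsupport hs, indicator_of_notMem hs]
  have hH'x₀ : Continuous (H' x₀) :=
    hH'.comp_continuous (continuous_const.prodMk continuous_id) fun s => ⟨hx₀, mem_univ s⟩
  refine (hasDerivAt_integral_of_dominated_loc_of_deriv_le (Metric.ball_mem_nhds x₀ hε) ?_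
    (((hH x₀ hx₀).mul hg).integrable_of_hasCompactSupport hsupp.mul_left)
    (hH'x₀.mul hg).aestronglyMeasurable (.of_forall hbound) ?_
    (.of_forall fun s x hx => (hd x (hball hx) s).mul_const (g s))).2
  · filter_upwards [hU.mem_nhds hx₀] with x hx
    exact ((hH x hx).mul hg).aestronglyMeasurable
  · exact (integrable_indicator_iff (isClosed_tsupport g).measurableSet).2
      (integrableOn_const hsupp.isCompact.measure_lt_top.ne)

end ParametricIntegral

/-- The convolution of `F t` with the odd extension of `g`. -/
noncomputable def imageIntegral (F : ℝ → ℝ → ℝ) (g : ℝ → ℝ) (t r : ℝ) : ℝ :=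
  ∫ s in Ioi 0, (F t (r - s) - F t (r + s)) * g s

section ImageIntegral

variable {F : ℝ → ℝ → ℝ} {g : ℝ → ℝ}

theorem imageIntegral_at_zero {t : ℝ} (hF : ∀ x, F t (-x) = F t x) :
    imageIntegral F g t 0 = 0 := by
  simp [imageIntegral, hF]

theorem hasDerivAt_imageIntegral_space (hg : Continuous g) (hsupp : HasCompactSupport g)
    {F' : ℝ → ℝ → ℝ} {t : ℝ} (hF' : Continuous (F' t))
    (hd : ∀ x, HasDerivAt (F t) (F' t x) x) (r : ℝ) :
    HasDerivAt (imageIntegral F g t) (imageIntegral F' g t r) r :=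
  have hF : Continuous (F t) := continuous_iff_continuousAt.2 fun x => (hd x).continuousAt
  hasDerivAt_integral_mul_of_hasCompactSupport hg hsupp isOpen_univ (mem_univ r)
    (fun _ _ => by fun_prop) (by fun_prop)
    fun x _ s => (hd (x - s)).comp_sub_const x s |>.sub ((hd (x + s)).comp_add_const x s)

theorem hasDerivAt_imageIntegral_time (hg : Continuous g) (hsupp : HasCompactSupport g)
    {G : ℝ → ℝ → ℝ} {U : Set ℝ} (hU : IsOpen U) {t : ℝ} (ht : t ∈ U)
    (hF : ∀ τ ∈ U, Continuous (F τ)) (hG : ContinuousOn (uncurry G) (U ×ˢ univ))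
    (hd : ∀ τ ∈ U, ∀ x, HasDerivAt (F · x) (G τ x) τ) (r : ℝ) :
    HasDerivAt (fun τ => imageIntegral F g τ r) (imageIntegral G g t r) t := by
  have hcomp : ∀ f : ℝ → ℝ, Continuous f →
      ContinuousOn (fun p : ℝ × ℝ => G p.1 (f p.2)) (U ×ˢ univ) := fun f hf =>
    hG.comp (f := fun p : ℝ × ℝ => (p.1, f p.2)) (by fun_prop) fun _ hp => ⟨hp.1, mem_univ _⟩
  exact hasDerivAt_integral_mul_of_hasCompactSupport
    (H := fun τ s => F τ (r - s) - F τ (r + s)) (H' := fun τ s => G τ (r - s) - G τ (r + s))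
    hg hsupp hU ht (fun τ hτ => by have := hF τ hτ; fun_prop)
    ((hcomp (r - ·) (by fun_prop)).sub (hcomp (r + ·) (by fun_prop)))
    fun τ hτ s => (hd τ hτ (r - s)).sub (hd τ hτ (r + s))

end ImageIntegral

noncomputable def heatKernel (t x : ℝ) : ℝ :=
  (4 * π * t) ^ (-(1 : ℝ) / 2) * exp (-x ^ 2 / (4 * t))

noncomputable def heatKernelDeriv (t x : ℝ) : ℝ := -x / (2 * t) * heatKernel t x

noncomputable def heatKernelDeriv2 (t x : ℝ) : ℝ :=
  (x ^ 2 / (4 * t ^ 2) - 1 / (2 * t)) * heatKernel t x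

section HeatKernel

variable {t : ℝ}

theorem heatKernel_neg (x : ℝ) : heatKernel t (-x) = heatKernel t x := by
  simp [heatKernel]

theorem continuous_heatKernel (t : ℝ) : Continuous (heatKernel t) := by
  unfold heatKernel; fun_prop

theorem continuous_heatKernelDeriv (t : ℝ) : Continuous (heatKernelDeriv t) := by
  unfold heatKernelDeriv; have := continuous_heatKernel t; fun_prop

theorem continuous_heatKernelDeriv2 (t : ℝ) : Continuous (heatKernelDeriv2 t) := by
  unfold heatKernelDeriv2; have := continuous_heatKernel t; fun_prop

theorem continuousOn_heatKernelDeriv2 :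
    ContinuousOn (uncurry heatKernelDeriv2) (Ioi 0 ×ˢ univ) := by
  rintro ⟨τ, x⟩ ⟨hτ, -⟩
  have hτ : τ ≠ 0 := (mem_Ioi.1 hτ).ne'
  refine ContinuousAt.continuousWithinAt (f := fun p : ℝ × ℝ => heatKernelDeriv2 p.1 p.2) ?_
  simp only [heatKernelDeriv2, heatKernel]
  fun_prop (disch := simp [hτ, pi_ne_zero])

theorem hasDerivAt_heatKernel (ht : t ≠ 0) (x : ℝ) :
    HasDerivAt (heatKernel t) (heatKernelDeriv t x) x := by
  have hexp : HasDerivAt (fun x => -x ^ 2 / (4 * t)) (-(2 * x) / (4 * t)) x := by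
    simpa using (hasDerivAt_pow 2 x).neg.div_const (4 * t)
  refine (hexp.exp.const_mul ((4 * π * t) ^ (-(1 : ℝ) / 2))).congr_deriv ?_
  simp only [heatKernelDeriv, heatKernel]
  field_simp
  ring

theorem hasDerivAt_heatKernelDeriv (ht : t ≠ 0) (x : ℝ) :
    HasDerivAt (heatKernelDeriv t) (heatKernelDeriv2 t x) x := by
  have hlin : HasDerivAt (fun x => -x / (2 * t)) (-1 / (2 * t)) x := by
    simpa using (hasDerivAt_id x).neg.div_const (2 * t)
  refine (hlin.mul (hasDerivAt_heatKernel ht x)).congr_deriv ?_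
  simp only [heatKernelDeriv2, heatKernelDeriv]
  field_simp
  ring

theorem hasDerivAt_heatKernel_time (ht : 0 < t) (x : ℝ) :
    HasDerivAt (heatKernel · x) (heatKernelDeriv2 t x) t := by
  have hpos : 0 < 4 * π * t := by positivity
  have hpow : HasDerivAt (fun τ => (4 * π * τ) ^ (-(1 : ℝ) / 2))
      (-(1 : ℝ) / 2 * (4 * π * t) ^ (-(1 : ℝ) / 2 - 1) * (4 * π)) t :=
    (Real.hasDerivAt_rpow_const (Or.inl hpos.ne')).comp t
      ((hasDerivAt_id t).const_mul (4 * π) |>.congr_deriv (mul_one _))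
  have hexp : HasDerivAt (fun τ => -x ^ 2 / (4 * τ)) (x ^ 2 / (4 * t ^ 2)) t := by
    have hinv := (hasDerivAt_inv ht.ne').const_mul (-x ^ 2 / 4)
    rw [show (fun τ => -x ^ 2 / (4 * τ)) = fun τ => -x ^ 2 / 4 * τ⁻¹ by ext τ; ring]
    exact hinv.congr_deriv (by ring)
  refine (hpow.mul hexp.exp).congr_deriv ?_
  rw [Real.rpow_sub hpos, Real.rpow_one]
  simp only [heatKernelDeriv2, heatKernel]
  field_simp
  ring

end HeatKernel

theorem halfLineSol_eq_imageIntegral (g : ℝ → ℝ) :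
    halfLineSol g = imageIntegral heatKernel g := by
  ext t r
  rw [halfLineSol, imageIntegral, ← integral_const_mul]
  congr 1 with s
  simp only [halfLineKernel, heatKernel]
  ring

theorem halfLineSol_boundary_and_heat_equation_general (g : ℝ → ℝ) (hg : Continuous g)
    (hsupp : HasCompactSupport g) :
    (∀ t : ℝ, 0 < t → halfLineSol g t 0 = 0) ∧
    ∀ t : ℝ, 0 < t → ∀ r : ℝ, 0 < r →
      DifferentiableAt ℝ (fun ρ => halfLineSol g t ρ) r ∧
      DifferentiableAt ℝ (deriv fun ρ => halfLineSol g t ρ) r ∧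
      HasDerivAt (fun τ => halfLineSol g τ r)
        (deriv (deriv fun ρ => halfLineSol g t ρ) r) t := by
  rw [halfLineSol_eq_imageIntegral]
  have hx : ∀ t ≠ 0, ∀ r, HasDerivAt (imageIntegral heatKernel g t)
      (imageIntegral heatKernelDeriv g t r) r := fun t ht =>
    hasDerivAt_imageIntegral_space hg hsupp (continuous_heatKernelDeriv t)
      (hasDerivAt_heatKernel ht)
  have hxx : ∀ t ≠ 0, ∀ r, HasDerivAt (imageIntegral heatKernelDeriv g t)
      (imageIntegral heatKernelDeriv2 g t r) r := fun t ht =>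
    hasDerivAt_imageIntegral_space hg hsupp (continuous_heatKernelDeriv2 t)
      (hasDerivAt_heatKernelDeriv ht)
  have hderiv : ∀ t ≠ 0,
      deriv (imageIntegral heatKernel g t) = imageIntegral heatKernelDeriv g t :=
    fun t ht => funext fun r => (hx t ht r).deriv
  refine ⟨fun t _ => imageIntegral_at_zero heatKernel_neg, fun t ht r _ => ?_⟩
  refine ⟨(hx t ht.ne' r).differentiableAt, ?_, ?_⟩
  · rw [hderiv t ht.ne']
    exact (hxx t ht.ne' r).differentiableAt
  · rw [hderiv t ht.ne', (hxx t ht.ne' r).deriv]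
    exact hasDerivAt_imageIntegral_time hg hsupp isOpen_Ioi ht
      (fun τ _ => continuous_heatKernel τ) continuousOn_heatKernelDeriv2
      (fun τ hτ => hasDerivAt_heatKernel_time hτ) r

/-- For continuous `g` with compact support in `(0,∞)`, the function
`v(t,r) = (4πt)^{-1/2} ∫₀^∞ k(t,r,s) g(s) ds` vanishes at `r = 0` and solves the
one-dimensional heat equation `∂ₜ v = ∂ᵣ² v` for `t > 0`, `r > 0`. -/
theorem halfLineSol_boundary_and_heat_equation (g : ℝ → ℝ) (hg : Continuous g)
    (hsupp : HasCompactSupport g) (hsub : tsupport g ⊆ Set.Ioi (0 : ℝ)) :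
    (∀ t : ℝ, 0 < t → halfLineSol g t 0 = 0) ∧
    ∀ t : ℝ, 0 < t → ∀ r : ℝ, 0 < r →
      DifferentiableAt ℝ (fun ρ => halfLineSol g t ρ) r ∧
      DifferentiableAt ℝ (deriv fun ρ => halfLineSol g t ρ) r ∧
      HasDerivAt (fun τ => halfLineSol g τ r)
        (deriv (deriv fun ρ => halfLineSol g t ρ) r) t :=
  halfLineSol_boundary_and_heat_equation_general g hg hsupp
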